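/- There exist C > 0 and s₅ ≥ 1 (depending only on p, A, ε₀ and the cut-off χ) such that for all s₀ ≥ s₅, all d = (d₀,…,d₅) ∈ [−2,2]⁶ and all y ≥ −e^{s₀/2}, one has |w₁(y,s₀)^{p−1} − 1/D(y,s₀)| ≤ C e^{−s₀/3}. -/

import Mathlib

open Real MeasureTheory Filter

/-- κ = (p−1)^{−1/(p−1)} -/
noncomputable def kappa (p : ℝ) : ℝ := (p - 1) ^ (-(1 / (p - 1)))

/-- Rescaled Hermite polynomial h_m(y) = ∑_{i=0}^{⌊m/2⌋} (m!/(i!(m−2i)!)) (−1)^i y^{m−2i}. -/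
noncomputable def hmPoly (m : ℕ) (y : ℝ) : ℝ :=
  ∑ i ∈ Finset.range (m / 2 + 1),
    ((Nat.factorial m : ℝ) / ((Nat.factorial i : ℝ) * (Nat.factorial (m - 2 * i) : ℝ)))
      * (-1 : ℝ) ^ i * y ^ (m - 2 * i)

/-- P(y) = ((p−1)/κ)(y⁴ − h₄(y)). -/
noncomputable def Ppoly (p y : ℝ) : ℝ := ((p - 1) / kappa p) * (y ^ 4 - hmPoly 4 y)

/-- D(y,s) = p−1 + ((p−1)²/κ) y⁴ e^{−s}. -/
noncomputable def Dfun (p y s : ℝ) : ℝ :=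
  (p - 1) + ((p - 1) ^ 2 / kappa p) * y ^ 4 * Real.exp (-s)

/-- E(y,s) = 1 + e^{−s} P(y). -/
noncomputable def Efun (p y s : ℝ) : ℝ := 1 + Real.exp (-s) * Ppoly p y

/-- Modified blow-up profile φ(y,s) = (E(y,s)/D(y,s))^{1/(p−1)}. -/
noncomputable def phi (p y s : ℝ) : ℝ := (Efun p y s / Dfun p y s) ^ (1 / (p - 1))

/-- Flat blow-up profile f(z) = (p−1 + ((p−1)²/κ) z⁴)^{−1/(p−1)}. -/
noncomputable def fprof (p z : ℝ) : ℝ :=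
  ((p - 1) + ((p - 1) ^ 2 / kappa p) * z ^ 4) ^ (-(1 / (p - 1)))

/-- One-dimensional Gaussian weight ρ₁(y) = e^{−y²/4}/√(4π). -/
noncomputable def rho1 (y : ℝ) : ℝ := Real.exp (-(y ^ 2) / 4) / Real.sqrt (4 * Real.pi)

/-- Weighted norm ‖g‖_{L^r_{ρ₁}} = (∫ |g(y)|^r ρ₁(y) dy)^{1/r}. -/
noncomputable def LrhoNorm (r : ℝ) (g : ℝ → ℝ) : ℝ :=
  (∫ y : ℝ, |g y| ^ r * rho1 y) ^ (1 / r)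

/-- Gaussian weight on ℝ^d: ρ_d(Y) = (4π)^{−d/2} e^{−|Y|²/4}. -/
noncomputable def rhod (d : ℕ) (Y : EuclideanSpace ℝ (Fin d)) : ℝ :=
  (4 * Real.pi) ^ (-(d : ℝ) / 2) * Real.exp (-‖Y‖ ^ 2 / 4)

/-- S(y) = ∑_{i=0}^{5} d_i h_i(y). -/
noncomputable def Spoly (dv : Fin 6 → ℝ) (y : ℝ) : ℝ :=
  ∑ i : Fin 6, dv i * hmPoly (i : ℕ) y

/-- The initial data
w₁(y,s₀) = χ((1 + y e^{−s₀/2})/ε₀) · (E/D + ((p−1)/(κ D²)) A e^{−2s₀} S(y))^{1/(p−1)}. -/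
noncomputable def w1 (p A ε₀ : ℝ) (χ : ℝ → ℝ) (dv : Fin 6 → ℝ) (y s₀ : ℝ) : ℝ :=
  χ ((1 + y * Real.exp (-s₀ / 2)) / ε₀) *
    (Efun p y s₀ / Dfun p y s₀
      + ((p - 1) / (kappa p * (Dfun p y s₀) ^ 2)) * A * Real.exp (-2 * s₀) * Spoly dv y)
        ^ (1 / (p - 1))

lemma exp_pow' (y : ℝ) (n : ℕ) : Real.exp y ^ n = Real.exp (n * y) := by
  induction n with
  | zero => simp
  | succ k ih => rw [pow_succ, ih, ← Real.exp_add]; congr 1; push_cast; ring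

lemma hm0 (y : ℝ) : hmPoly 0 y = 1 := by norm_num [hmPoly]
lemma hm1 (y : ℝ) : hmPoly 1 y = y := by norm_num [hmPoly]
lemma hm2 (y : ℝ) : hmPoly 2 y = y^2 - 2 := by
  norm_num [hmPoly, Finset.sum_range_succ, Nat.factorial]; ring
lemma hm3 (y : ℝ) : hmPoly 3 y = y^3 - 6*y := by
  norm_num [hmPoly, Finset.sum_range_succ, Nat.factorial]; ring
lemma hm4 (y : ℝ) : hmPoly 4 y = y^4 - 12*y^2 + 12 := by
  norm_num [hmPoly, Finset.sum_range_succ, Nat.factorial]; ring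
lemma hm5 (y : ℝ) : hmPoly 5 y = y^5 - 20*y^3 + 60*y := by
  norm_num [hmPoly, Finset.sum_range_succ, Nat.factorial]; ring

lemma hm_le (y : ℝ) (i : Fin 6) : |hmPoly (i : ℕ) y| ≤ 100 * (1 + |y|) ^ 5 := by
  have h0 := abs_nonneg y
  have p2 := pow_nonneg h0 2
  have p3 := pow_nonneg h0 3
  have p4 := pow_nonneg h0 4
  have p5 := pow_nonneg h0 5
  fin_cases i
  · rw [show ((⟨0,by norm_num⟩ : Fin 6) : ℕ) = 0 from rfl, hm0, abs_one]; nlinarith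
  · rw [show ((⟨1,by norm_num⟩ : Fin 6) : ℕ) = 1 from rfl, hm1]; rw [abs_le]
    constructor <;> nlinarith [le_abs_self y, neg_abs_le y]
  · rw [show ((⟨2,by norm_num⟩ : Fin 6) : ℕ) = 2 from rfl, hm2]; rw [abs_le]
    constructor <;> nlinarith [le_abs_self (y^2), neg_abs_le (y^2), abs_pow y 2]
  · rw [show ((⟨3,by norm_num⟩ : Fin 6) : ℕ) = 3 from rfl, hm3]; rw [abs_le]
    constructor <;> nlinarith [le_abs_self (y^3), neg_abs_le (y^3), le_abs_self y, neg_abs_le y, abs_pow y 3]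
  · rw [show ((⟨4,by norm_num⟩ : Fin 6) : ℕ) = 4 from rfl, hm4]; rw [abs_le]
    constructor <;> nlinarith [le_abs_self (y^4), neg_abs_le (y^4), le_abs_self (y^2), neg_abs_le (y^2), abs_pow y 4, abs_pow y 2]
  · rw [show ((⟨5,by norm_num⟩ : Fin 6) : ℕ) = 5 from rfl, hm5]; rw [abs_le]
    constructor <;> nlinarith [le_abs_self (y^5), neg_abs_le (y^5), le_abs_self (y^3), neg_abs_le (y^3), le_abs_self y, neg_abs_le y, abs_pow y 5, abs_pow y 3]

lemma S_le (dv : Fin 6 → ℝ) (hdv : ∀ i, dv i ∈ Set.Icc (-2:ℝ) 2) (y : ℝ) :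
    |Spoly dv y| ≤ 1200 * (1 + |y|) ^ 5 := by
  have h : |Spoly dv y| ≤ ∑ _i : Fin 6, 2 * (100 * (1 + |y|)^5) := by
    refine (Finset.abs_sum_le_sum_abs _ _).trans (Finset.sum_le_sum fun i _ => ?_)
    rw [abs_mul]
    exact mul_le_mul (abs_le.2 ⟨(hdv i).1, (hdv i).2⟩) (hm_le y i) (abs_nonneg _) (by norm_num)
  refine h.trans (le_of_eq ?_)
  simp [Finset.sum_const]; ring


lemma assemble_pos (p χa X d t c12 c3 : ℝ) (hp1 : 0 < p - 1)
    (hχa0 : 0 ≤ χa) (hχa1 : χa ≤ 1) (hd : 0 < d) (ht : 0 < t) (hc3 : 0 < c3)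
    (hcore : |X - 1/d| ≤ c12 * t) (hfar : χa ≠ 1 → 1/d ≤ c3 * t) (hX : 0 ≤ X) :
    |(χa * X ^ (1/(p-1))) ^ (p-1) - 1/d| ≤ (3*c12 + c3 + 1) * t := by
  have hpne : p - 1 ≠ 0 := ne_of_gt hp1
  have hc12t : 0 ≤ c12 * t := le_trans (abs_nonneg _) hcore
  have hc12' : 0 ≤ c12 := by nlinarith
  have h1d : 0 < 1/d := by positivity
  rw [Real.mul_rpow hχa0 (Real.rpow_nonneg hX _), ← Real.rpow_mul hX, one_div,
    inv_mul_cancel₀ hpne, Real.rpow_one]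
  have hχpow0 : 0 ≤ χa^(p-1) := Real.rpow_nonneg hχa0 _
  have hχpow1 : χa^(p-1) ≤ 1 := Real.rpow_le_one hχa0 hχa1 (le_of_lt hp1)
  have heq : χa^(p-1) * X - 1/d = χa^(p-1) * (X - 1/d) + (χa^(p-1) - 1) * (1/d) := by ring
  rw [heq]
  refine (abs_add_le _ _).trans ?_
  have hb1 : |χa^(p-1) * (X - 1/d)| ≤ c12 * t := by
    rw [abs_mul, abs_of_nonneg hχpow0]
    calc χa^(p-1) * |X - 1/d|
        ≤ 1 * (c12*t) := mul_le_mul hχpow1 hcore (abs_nonneg _) one_pos.le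
      _ = c12*t := one_mul _
  have hb2 : |(χa^(p-1) - 1) * (1/d)| ≤ c3 * t := by
    by_cases hone : χa = 1
    · rw [hone, Real.one_rpow, sub_self, zero_mul, abs_zero]; positivity
    · rw [abs_mul, abs_of_pos h1d]
      have habs1 : |χa^(p-1) - 1| ≤ 1 := by
        rw [abs_le]; constructor <;> linarith
      calc |χa^(p-1) - 1| * (1/d)
          ≤ 1 * (c3*t) := mul_le_mul habs1 (hfar hone) (le_of_lt h1d) one_pos.le
        _ = c3*t := one_mul _
  calc |χa^(p-1)*(X - 1/d)| + |(χa^(p-1)-1)*(1/d)|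
      ≤ c12*t + c3*t := add_le_add hb1 hb2
    _ ≤ (3*c12+c3+1)*t := by nlinarith

lemma assemble_neg (p χa X d t c12 c3 : ℝ) (hp1 : 0 < p - 1)
    (hχa0 : 0 ≤ χa) (hχa1 : χa ≤ 1) (hd : 0 < d) (ht : 0 < t) (hc3 : 0 < c3)
    (hcore : |X - 1/d| ≤ c12 * t) (hX : X < 0) :
    |(χa * X ^ (1/(p-1))) ^ (p-1) - 1/d| ≤ (3*c12 + c3 + 1) * t := by
  have hpne : p - 1 ≠ 0 := ne_of_gt hp1
  have h1d : 0 < 1/d := by positivity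
  have hc12' : 0 ≤ c12 := by nlinarith [abs_nonneg (X - 1/d), hcore]
  have hwabs : |(χa * X^(1/(p-1)))^(p-1)| ≤ |X| := by
    calc |(χa * X^(1/(p-1)))^(p-1)|
        ≤ |χa * X^(1/(p-1))|^(p-1) := Real.abs_rpow_le_abs_rpow _ _
      _ ≤ (|X|^(1/(p-1)))^(p-1) := by
          apply Real.rpow_le_rpow (abs_nonneg _) _ (le_of_lt hp1)
          rw [abs_mul, abs_of_nonneg hχa0]
          calc χa * |X^(1/(p-1))|
              ≤ 1 * (|X|^(1/(p-1))) :=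
                mul_le_mul hχa1 (Real.abs_rpow_le_abs_rpow _ _) (abs_nonneg _) one_pos.le
            _ = |X|^(1/(p-1)) := one_mul _
      _ = |X| := by
          rw [← Real.rpow_mul (abs_nonneg _), one_div, inv_mul_cancel₀ hpne, Real.rpow_one]
  have htri : |(χa * X^(1/(p-1)))^(p-1) - 1/d|
      ≤ |(χa * X^(1/(p-1)))^(p-1)| + |1/d| := by
    rw [sub_eq_add_neg]
    exact (abs_add_le _ _).trans_eq (by rw [abs_neg])
  calc |(χa * X^(1/(p-1)))^(p-1) - 1/d|
      ≤ |(χa*X^(1/(p-1)))^(p-1)| + |1/d| := htri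
    _ ≤ |X| + 1/d := by rw [abs_of_pos h1d]; exact add_le_add hwabs le_rfl
    _ = |X - 1/d| := by
        rw [abs_of_neg hX, abs_of_neg (by linarith : X - 1/d < 0)]; ring
    _ ≤ c12*t := hcore
    _ ≤ (3*c12+c3+1)*t := by nlinarith

set_option maxHeartbeats 800000 in
/-- |w₁(y,s₀)^{p−1} − 1/D(y,s₀)| ≤ C e^{−s₀/3} for y ≥ −e^{s₀/2}. -/
theorem statement16 (p : ℝ) (hp : 1 < p) (A : ℝ) (hA : 1 ≤ A)
    (ε₀ : ℝ) (hε₀ : ε₀ ∈ Set.Ioo (0 : ℝ) 1)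
    (χ : ℝ → ℝ) (Kχ : ℝ)
    (hχsm : ContDiff ℝ 1 χ) (hχrange : ∀ x, χ x ∈ Set.Icc (0 : ℝ) 1)
    (hχ0 : ∀ x ≤ (1 / 8 : ℝ), χ x = 0) (hχ1 : ∀ x ≥ (1 / 4 : ℝ), χ x = 1)
    (hχ' : ∀ x, |deriv χ x| ≤ Kχ) :
    ∃ C > (0 : ℝ), ∃ s₅ ≥ (1 : ℝ), ∀ s₀ ≥ s₅, ∀ dv : Fin 6 → ℝ,
      (∀ i, dv i ∈ Set.Icc (-2 : ℝ) 2) →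
      ∀ y : ℝ, y ≥ -Real.exp (s₀ / 2) →
        |w1 p A ε₀ χ dv y s₀ ^ (p - 1) - 1 / Dfun p y s₀| ≤ C * Real.exp (-s₀ / 3) := by
  obtain ⟨he0, he1⟩ := hε₀
  have hp1 : (0:ℝ) < p - 1 := by linarith
  have hpne : p - 1 ≠ 0 := ne_of_gt hp1
  have hk : (0:ℝ) < kappa p := Real.rpow_pos_of_pos hp1 _
  have hkne : kappa p ≠ 0 := ne_of_gt hk
  have hA0 : (0:ℝ) < A := by linarith
  obtain ⟨c1, hc1def⟩ : ∃ c1 : ℝ, c1 = 24 / kappa p + 12 / (p - 1) := ⟨_, rfl⟩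
  obtain ⟨c2, hc2def⟩ : ∃ c2 : ℝ,
      c2 = 38400 * A / (kappa p * (p - 1)) + 38400 * A * kappa p / (p - 1) ^ 3 := ⟨_, rfl⟩
  obtain ⟨c3, hc3def⟩ : ∃ c3 : ℝ, c3 = (4 / 3 : ℝ) ^ 4 * kappa p / (p - 1) ^ 2 := ⟨_, rfl⟩
  have hc1p : 0 < c1 := by rw [hc1def]; positivity
  have hc2p : 0 < c2 := by rw [hc2def]; positivity
  have hc3p : 0 < c3 := by rw [hc3def]; positivity
  refine ⟨3 * (c1 + c2) + c3 + 1, by positivity, 1, le_refl 1, ?_⟩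
  intro s₀ hs₀ dv hdv y _hy
  have hs0 : (0:ℝ) ≤ s₀ := by linarith
  obtain ⟨T, hTdef⟩ : ∃ T : ℝ, T = Real.exp (s₀ / 6) := ⟨_, rfl⟩
  have hTpos : 0 < T := hTdef ▸ Real.exp_pos _
  have hTne : T ≠ 0 := ne_of_gt hTpos
  have hT1 : (1:ℝ) ≤ T := hTdef ▸ Real.one_le_exp (by linarith)
  have hT2one : (1:ℝ) ≤ T^2 := by nlinarith
  have hE1 : Real.exp (-s₀) = (T^6)⁻¹ := by
    rw [hTdef, exp_pow', ← Real.exp_neg]; exact congrArg Real.exp (by push_cast; ring)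
  have hE2 : Real.exp (-2 * s₀) = (T^12)⁻¹ := by
    rw [hTdef, exp_pow', ← Real.exp_neg]; exact congrArg Real.exp (by push_cast; ring)
  have hE3 : Real.exp (-s₀ / 3) = (T^2)⁻¹ := by
    rw [hTdef, exp_pow', ← Real.exp_neg]; exact congrArg Real.exp (by push_cast; ring)
  have hE5 : Real.exp (-s₀ / 2) = (T^3)⁻¹ := by
    rw [hTdef, exp_pow', ← Real.exp_neg]; exact congrArg Real.exp (by push_cast; ring)
  have hT2pos : (0:ℝ) < (T^2)⁻¹ := by positivity
  -- D facts
  have hDeq : Dfun p y s₀ = (p-1) + (p-1)^2 / kappa p * y^4 * (T^6)⁻¹ := by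
    rw [Dfun, hE1]
  have hDlb1 : p - 1 ≤ Dfun p y s₀ := by
    have h : 0 ≤ (p-1)^2 / kappa p * y^4 * (T^6)⁻¹ := by positivity
    rw [hDeq]; linarith
  have hD0 : 0 < Dfun p y s₀ := lt_of_lt_of_le hp1 hDlb1
  have hDne : Dfun p y s₀ ≠ 0 := ne_of_gt hD0
  have hDlb2 : (p-1)^2 / kappa p * y^4 * (T^6)⁻¹ ≤ Dfun p y s₀ := by
    rw [hDeq]; linarith
  have hPval : Ppoly p y = 12*(p-1)/kappa p * (y^2 - 1) := by
    rw [Ppoly, hm4]; ring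
  -- Term 1 bound
  have hT1b : |Real.exp (-s₀) * Ppoly p y / Dfun p y s₀| ≤ c1 * (T^2)⁻¹ := by
    rw [hPval, hE1, abs_div, abs_of_pos hD0, abs_mul, abs_mul,
      abs_of_pos (by positivity : (0:ℝ) < (T^6)⁻¹),
      abs_of_pos (by positivity : (0:ℝ) < 12*(p-1)/kappa p), ← mul_assoc]
    rcases le_or_gt (|y|) (T^2) with hcase | hcase
    · have hy2 : y^2 ≤ T^4 := by
        calc y^2 = |y|^2 := (sq_abs y).symm
          _ ≤ (T^2)^2 := pow_le_pow_left₀ (abs_nonneg y) hcase 2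
          _ = T^4 := by ring
      have habs1 : |y^2 - 1| ≤ 2*T^4 := by
        rw [abs_le]; constructor <;> nlinarith [sq_nonneg y, sq_nonneg (T^2)]
      calc (T^6)⁻¹ * (12*(p-1)/kappa p) * |y^2-1| / Dfun p y s₀
          ≤ (T^6)⁻¹ * (12*(p-1)/kappa p) * (2*T^4) / (p-1) := by
            apply div_le_div₀ (by positivity) (by gcongr) hp1 hDlb1
        _ = 24/kappa p * (T^2)⁻¹ := by field_simp; ring
        _ ≤ c1 * (T^2)⁻¹ := by
            apply mul_le_mul_of_nonneg_right _ (le_of_lt hT2pos)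
            rw [hc1def]
            have : 0 < 12 / (p-1) := by positivity
            linarith
    · have hyne : y ≠ 0 := by
        intro h; rw [h, abs_zero] at hcase; nlinarith
      have hy2T4 : T^4 ≤ y^2 := by
        calc T^4 = (T^2)^2 := by ring
          _ ≤ |y|^2 := pow_le_pow_left₀ (by positivity) hcase.le 2
          _ = y^2 := sq_abs y
      have h1T4 : (1:ℝ) ≤ T^4 := by nlinarith
      have habs1 : |y^2 - 1| ≤ y^2 := by
        rw [abs_le]; constructor <;> nlinarith
      calc (T^6)⁻¹ * (12*(p-1)/kappa p) * |y^2-1| / Dfun p y s₀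
          ≤ (T^6)⁻¹ * (12*(p-1)/kappa p) * y^2 / ((p-1)^2/kappa p * y^4 * (T^6)⁻¹) := by
            apply div_le_div₀ (by positivity) (by gcongr) (by positivity) hDlb2
        _ = 12/((p-1) * y^2) := by field_simp
        _ ≤ 12/((p-1) * T^2) := by
            apply div_le_div_of_nonneg_left (by norm_num) (by positivity)
            apply mul_le_mul_of_nonneg_left _ (le_of_lt hp1)
            nlinarith
        _ = 12/(p-1) * (T^2)⁻¹ := by field_simp
        _ ≤ c1 * (T^2)⁻¹ := by
            apply mul_le_mul_of_nonneg_right _ (le_of_lt hT2pos)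
            rw [hc1def]
            have : 0 < 24 / kappa p := by positivity
            linarith
  
  -- Term 2 bound
  have habsyne : |Spoly dv y| ≥ 0 := abs_nonneg _
  have hT2b : |(p - 1) / (kappa p * Dfun p y s₀ ^ 2) * A * Real.exp (-2 * s₀) * Spoly dv y|
      ≤ c2 * (T^2)⁻¹ := by
    rw [hE2, abs_mul,
      abs_of_pos (by positivity : (0:ℝ) < (p - 1) / (kappa p * Dfun p y s₀ ^ 2) * A * (T^12)⁻¹)]
    have hS := S_le dv hdv y
    rcases le_or_gt (|y|) (T^2) with hcase | hcase
    · have h5 : |Spoly dv y| ≤ 1200 * (32*T^10) := by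
        refine hS.trans ?_
        have h51 : (1+|y|)^5 ≤ 32*T^10 :=
          (pow_le_pow_left₀ (by positivity) (by linarith : 1+|y| ≤ 2*T^2) 5).trans_eq (by ring)
        exact mul_le_mul_of_nonneg_left h51 (by norm_num)
      have hD2 : (p-1)^2 ≤ Dfun p y s₀^2 := pow_le_pow_left₀ (le_of_lt hp1) hDlb1 2
      calc (p - 1) / (kappa p * Dfun p y s₀ ^ 2) * A * (T^12)⁻¹ * |Spoly dv y|
          ≤ (p - 1) / (kappa p * (p-1) ^ 2) * A * (T^12)⁻¹ * (1200*(32*T^10)) := by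
            gcongr
        _ = 38400*A/(kappa p*(p-1)) * (T^2)⁻¹ := by field_simp; ring
        _ ≤ c2 * (T^2)⁻¹ := by
            apply mul_le_mul_of_nonneg_right _ (le_of_lt hT2pos)
            rw [hc2def]
            have : 0 < 38400 * A * kappa p / (p - 1) ^ 3 := by positivity
            linarith
    · have hy1 : (1:ℝ) ≤ |y| := le_trans hT2one hcase.le
      have hyne : y ≠ 0 := by
        intro h; rw [h, abs_zero] at hy1; linarith
      have habsne : |y| ≠ 0 := by positivity
      have h5 : |Spoly dv y| ≤ 1200 * (32*|y|^5) := by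
        refine hS.trans ?_
        have h51 : (1+|y|)^5 ≤ 32*|y|^5 :=
          (pow_le_pow_left₀ (by positivity) (by linarith : 1+|y| ≤ 2*|y|) 5).trans_eq (by ring)
        exact mul_le_mul_of_nonneg_left h51 (by norm_num)
      have hD2 : ((p-1)^2/kappa p * y^4 * (T^6)⁻¹)^2 ≤ Dfun p y s₀^2 :=
        pow_le_pow_left₀ (by positivity) hDlb2 2
      have hy4 : y^4 = |y|^4 := by
        rw [← abs_pow]; exact (abs_of_nonneg (by positivity)).symm
      calc (p - 1) / (kappa p * Dfun p y s₀ ^ 2) * A * (T^12)⁻¹ * |Spoly dv y|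
          ≤ (p - 1) / (kappa p * (((p-1)^2/kappa p * y^4 * (T^6)⁻¹)^2)) * A * (T^12)⁻¹
              * (1200*(32*|y|^5)) := by
            gcongr
        _ = 38400*A*kappa p/(p-1)^3 * (|y|^3)⁻¹ := by
            rw [hy4]; field_simp; ring
        _ ≤ 38400*A*kappa p/(p-1)^3 * (T^2)⁻¹ := by
            have hTy : T^2 ≤ |y|^3 := hcase.le.trans (le_self_pow₀ hy1 (by norm_num))
            gcongr
        _ ≤ c2 * (T^2)⁻¹ := by
            apply mul_le_mul_of_nonneg_right _ (le_of_lt hT2pos)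
            rw [hc2def]
            have : 0 < 38400 * A / (kappa p * (p - 1)) := by positivity
            linarith
  -- core estimate
  have hcore : |Efun p y s₀ / Dfun p y s₀
      + (p - 1) / (kappa p * Dfun p y s₀ ^ 2) * A * Real.exp (-2 * s₀) * Spoly dv y
      - 1 / Dfun p y s₀| ≤ (c1 + c2) * (T^2)⁻¹ := by
    have hsplit : Efun p y s₀ / Dfun p y s₀
        + (p - 1) / (kappa p * Dfun p y s₀ ^ 2) * A * Real.exp (-2 * s₀) * Spoly dv y
        - 1 / Dfun p y s₀
        = Real.exp (-s₀) * Ppoly p y / Dfun p y s₀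
          + (p - 1) / (kappa p * Dfun p y s₀ ^ 2) * A * Real.exp (-2 * s₀) * Spoly dv y := by
      rw [Efun]; ring
    rw [hsplit]
    calc |Real.exp (-s₀) * Ppoly p y / Dfun p y s₀
        + (p - 1) / (kappa p * Dfun p y s₀ ^ 2) * A * Real.exp (-2 * s₀) * Spoly dv y|
        ≤ |Real.exp (-s₀) * Ppoly p y / Dfun p y s₀|
          + |(p - 1) / (kappa p * Dfun p y s₀ ^ 2) * A * Real.exp (-2 * s₀) * Spoly dv y| :=
          abs_add_le _ _
      _ ≤ c1 * (T^2)⁻¹ + c2 * (T^2)⁻¹ := add_le_add hT1b hT2b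
      _ = (c1 + c2) * (T^2)⁻¹ := by ring
  -- far region
  have hfar : χ ((1 + y * Real.exp (-s₀ / 2)) / ε₀) ≠ 1 → 1 / Dfun p y s₀ ≤ c3 * (T^2)⁻¹ := by
    intro hne
    have ha : (1 + y * Real.exp (-s₀ / 2)) / ε₀ < 1/4 := by
      by_contra h
      exact hne (hχ1 _ (le_of_not_gt h))
    rw [div_lt_iff₀ he0] at ha
    have h2 : y * Real.exp (-s₀ / 2) < -(3/4) := by linarith
    rw [hE5] at h2
    have h3 : y < -(3/4) * T^3 := by
      have h4 := mul_lt_mul_of_pos_right h2 (by positivity : (0:ℝ) < T^3)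
      rw [mul_assoc, inv_mul_cancel₀ (by positivity : (T:ℝ)^3 ≠ 0), mul_one] at h4
      linarith
    have h5 : (3/4*T^3)^4 ≤ y^4 := by
      calc (3/4*T^3)^4 ≤ (-y)^4 := pow_le_pow_left₀ (by positivity) (by linarith) 4
        _ = y^4 := by ring
    have h6 : (p-1)^2/kappa p * (3/4*T^3)^4 * (T^6)⁻¹ ≤ Dfun p y s₀ :=
      le_trans (by gcongr) hDlb2
    calc 1/Dfun p y s₀ ≤ 1/((p-1)^2/kappa p * (3/4*T^3)^4 * (T^6)⁻¹) :=
          one_div_le_one_div_of_le (by positivity) h6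
      _ = (4/3:ℝ)^4*kappa p/(p-1)^2 * (T^6)⁻¹ := by field_simp
      _ ≤ (4/3:ℝ)^4*kappa p/(p-1)^2 * (T^2)⁻¹ := by
          have hTT : T^2 ≤ T^6 := pow_le_pow_right₀ hT1 (by norm_num)
          gcongr
      _ = c3 * (T^2)⁻¹ := by rw [hc3def]
  -- assemble
  rw [hE3, w1]
  set χa := χ ((1 + y * Real.exp (-s₀ / 2)) / ε₀) with hχadef
  set X := Efun p y s₀ / Dfun p y s₀
      + (p - 1) / (kappa p * Dfun p y s₀ ^ 2) * A * Real.exp (-2 * s₀) * Spoly dv y with hXdef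
  have hχa0 : (0:ℝ) ≤ χa := (hχrange _).1
  have hχa1 : χa ≤ 1 := (hχrange _).2
  clear_value χa X
  have h1Dpos : (0:ℝ) < 1 / Dfun p y s₀ := by positivity
  by_cases hzero : χa = 0
  · rw [hzero, zero_mul, Real.zero_rpow hpne, zero_sub, abs_neg, abs_of_pos h1Dpos]
    have hne1 : χa ≠ 1 := by rw [hzero]; norm_num
    calc 1/Dfun p y s₀ ≤ c3*(T^2)⁻¹ := hfar hne1
      _ ≤ (3*(c1+c2)+c3+1)*(T^2)⁻¹ :=
          mul_le_mul_of_nonneg_right (by linarith) (le_of_lt hT2pos)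
  · by_cases hXpos : 0 ≤ X
    · exact assemble_pos p χa X (Dfun p y s₀) ((T^2)⁻¹) (c1+c2) c3 hp1 hχa0 hχa1
        hD0 hT2pos hc3p hcore hfar hXpos
    · push_neg at hXpos
      exact assemble_neg p χa X (Dfun p y s₀) ((T^2)⁻¹) (c1+c2) c3 hp1 hχa0 hχa1
        hD0 hT2pos hc3p hcore hXpos
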